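/- arXiv:1909.06057 — 3 statements merged into one kernel-verified Lean document; each statement's English description precedes it below -/
import Mathlib

section
/- Let a, b > 0, R > 0, c > 0, and γ ∈ ℝ, and set K = (1/2)·(1 + (R/c)·(a/(a+b+1) − γ)). Then the two inequalities I_{1/2}(a, b+1) ≤ K and I_{1/2}(a+1, b) ≥ K + R/(2c(a+b+1)) cannot both hold. -/
/-!
The densities of `Beta(a+1, b)` and `Beta(a, b+1)` are `t w(t)` and `(1 - t) w(t)` up to
normalisation, with `w(t) = t^(a-1) (1-t)^(b-1)`. Their ratio `t / (1 - t)` is increasing, so the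
first distribution is stochastically larger: `I_x(a+1, b) ≤ I_x(a, b+1)` for every `x ∈ [0,1]`.
At `x = 1/2` this contradicts the two inequalities, whose right-hand sides differ by
`R / (2c(a+b+1)) > 0` in the wrong direction.
-/

open intervalIntegral

/-- The Beta function `B(a,b) = ∫_0^1 t^(a−1)(1−t)^(b−1) dt`. -/
noncomputable def betaFn (a b : ℝ) : ℝ :=
  ∫ t in (0:ℝ)..1, t ^ (a - 1) * (1 - t) ^ (b - 1)

/-- The regularized incomplete Beta function
`I_x(a,b) = (∫_0^x t^(a−1)(1−t)^(b−1) dt) / B(a,b)`. -/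
noncomputable def regIncBeta (x a b : ℝ) : ℝ :=
  (∫ t in (0:ℝ)..x, t ^ (a - 1) * (1 - t) ^ (b - 1)) / betaFn a b

open Set

lemma mul_le_mul_of_weighted_le {x P Q A B : ℝ} (hP : 0 ≤ P) (hQ : 0 ≤ Q) (hA : 0 ≤ A) (hB : 0 ≤ B)
    (hPA : (1 - x) * P ≤ x * A) (hBQ : x * B ≤ (1 - x) * Q) : P * B ≤ A * Q := by
  nlinarith [mul_le_mul_of_nonneg_left hBQ hP, mul_le_mul_of_nonneg_left hPA hQ,
    mul_le_mul_of_nonneg_left hPA hB, mul_le_mul_of_nonneg_left hBQ hA]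

section Weight

variable {w f g : ℝ → ℝ} {c d x : ℝ}

lemma intervalIntegrable_mul_weight (hw : IntervalIntegrable w MeasureTheory.volume 0 1)
    (hg : Continuous g) (hc : 0 ≤ c) (hcd : c ≤ d) (hd : d ≤ 1) :
    IntervalIntegrable (fun t => g t * w t) MeasureTheory.volume c d := by
  refine (hw.mono_set ?_).continuousOn_mul hg.continuousOn
  rw [uIcc_of_le hcd, uIcc_of_le zero_le_one]
  exact Icc_subset_Icc hc hd

lemma integral_mul_weight_mono (hw : IntervalIntegrable w MeasureTheory.volume 0 1)
    (hw0 : ∀ t ∈ Icc (0:ℝ) 1, 0 ≤ w t) (hf : Continuous f) (hg : Continuous g)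
    (hc : 0 ≤ c) (hcd : c ≤ d) (hd : d ≤ 1) (hfg : ∀ t ∈ Icc c d, f t ≤ g t) :
    ∫ t in c..d, f t * w t ≤ ∫ t in c..d, g t * w t :=
  integral_mono_on hcd (intervalIntegrable_mul_weight hw hf hc hcd hd)
    (intervalIntegrable_mul_weight hw hg hc hcd hd) fun t ht =>
      mul_le_mul_of_nonneg_right (hfg t ht) (hw0 t ⟨hc.trans ht.1, ht.2.trans hd⟩)

lemma integral_mul_integral_le_of_nonneg_weight (hw : IntervalIntegrable w MeasureTheory.volume 0 1)
    (hw0 : ∀ t ∈ Icc (0:ℝ) 1, 0 ≤ w t) (hx0 : 0 ≤ x) (hx1 : x ≤ 1) :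
    (∫ t in (0:ℝ)..x, t * w t) * (∫ t in (0:ℝ)..1, (1 - t) * w t) ≤
      (∫ t in (0:ℝ)..x, (1 - t) * w t) * (∫ t in (0:ℝ)..1, t * w t) := by
  have hid : Continuous fun t : ℝ => t := continuous_id
  have hone : Continuous fun t : ℝ => 1 - t := continuous_const.sub continuous_id
  have hnonneg : ∀ {g : ℝ → ℝ} {c d : ℝ}, Continuous g → 0 ≤ c → c ≤ d → d ≤ 1 →
      (∀ t ∈ Icc c d, 0 ≤ g t) → 0 ≤ ∫ t in c..d, g t * w t := fun hg hc hcd hd hg0 => by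
    simpa using integral_mul_weight_mono hw hw0 continuous_const hg hc hcd hd hg0
  -- `(1 - x) t ≤ x (1 - t)` exactly when `t ≤ x`
  have hPA : (1 - x) * ∫ t in (0:ℝ)..x, t * w t ≤ x * ∫ t in (0:ℝ)..x, (1 - t) * w t := by
    simpa only [mul_assoc, integral_const_mul] using
      integral_mul_weight_mono (f := fun t => (1 - x) * t) (g := fun t => x * (1 - t)) hw hw0
        (by fun_prop) (by fun_prop) le_rfl hx0 hx1 fun t ht => by nlinarith [ht.2]
  have hBQ : x * ∫ t in x..1, (1 - t) * w t ≤ (1 - x) * ∫ t in x..1, t * w t := by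
    simpa only [mul_assoc, integral_const_mul] using
      integral_mul_weight_mono (f := fun t => x * (1 - t)) (g := fun t => (1 - x) * t) hw hw0
        (by fun_prop) (by fun_prop) hx0 hx1 le_rfl fun t ht => by nlinarith [ht.1]
  rw [← integral_add_adjacent_intervals (intervalIntegrable_mul_weight hw hone le_rfl hx0 hx1)
      (intervalIntegrable_mul_weight hw hone hx0 hx1 le_rfl),
    ← integral_add_adjacent_intervals (intervalIntegrable_mul_weight hw hid le_rfl hx0 hx1)
      (intervalIntegrable_mul_weight hw hid hx0 hx1 le_rfl)]
  linear_combination mul_le_mul_of_weighted_le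
    (hnonneg hid le_rfl hx0 hx1 fun t ht => ht.1)
    (hnonneg hid hx0 hx1 le_rfl fun t ht => hx0.trans ht.1)
    (hnonneg hone le_rfl hx0 hx1 fun t ht => by linarith [ht.2])
    (hnonneg hone hx0 hx1 le_rfl fun t ht => by linarith [ht.2]) hPA hBQ

end Weight

noncomputable def betaIntegrand (a b t : ℝ) : ℝ := t ^ (a - 1) * (1 - t) ^ (b - 1)

section Beta

variable {a b t : ℝ}

lemma betaIntegrand_nonneg (ht : t ∈ Icc (0:ℝ) 1) : 0 ≤ betaIntegrand a b t :=
  mul_nonneg (Real.rpow_nonneg ht.1 _) (Real.rpow_nonneg (sub_nonneg.2 ht.2) _)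

lemma betaIntegrand_add_one_left (ha : a ≠ 0) (ht : 0 ≤ t) :
    betaIntegrand (a + 1) b t = t * betaIntegrand a b t := by
  have h := Real.rpow_add_one' ht (y := a - 1) (by rwa [sub_add_cancel])
  rw [sub_add_cancel] at h
  rw [betaIntegrand, betaIntegrand, add_sub_cancel_right, h]
  ring

lemma betaIntegrand_add_one_right (hb : b ≠ 0) (ht : t ≤ 1) :
    betaIntegrand a (b + 1) t = (1 - t) * betaIntegrand a b t := by
  have h := Real.rpow_add_one' (sub_nonneg.2 ht) (y := b - 1) (by rwa [sub_add_cancel])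
  rw [sub_add_cancel] at h
  rw [betaIntegrand, betaIntegrand, add_sub_cancel_right, h]
  ring

lemma intervalIntegrable_betaIntegrand (ha : 0 < a) (hb : 0 < b) :
    IntervalIntegrable (betaIntegrand a b) MeasureTheory.volume 0 1 := by
  -- split at `1/2`: each factor is singular at only one endpoint
  have hleft : IntervalIntegrable (betaIntegrand a b) MeasureTheory.volume 0 (1/2) := by
    have hcont : ContinuousOn (fun t : ℝ => (1 - t) ^ (b - 1)) (uIcc 0 (1/2)) := by
      refine (continuous_const.sub continuous_id).continuousOn.rpow_const fun t ht => ?_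
      rw [uIcc_of_le (by norm_num)] at ht
      exact Or.inl (show (1:ℝ) - t ≠ 0 by linarith [ht.2])
    exact (intervalIntegrable_rpow' (r := a - 1) (by linarith)).mul_continuousOn hcont
  have hright : IntervalIntegrable (betaIntegrand a b) MeasureTheory.volume (1/2) 1 := by
    have hsing : IntervalIntegrable (fun t : ℝ => (1 - t) ^ (b - 1)) MeasureTheory.volume
        (1/2) 1 := by
      have := (intervalIntegrable_rpow' (a := 0) (b := 1/2) (r := b - 1)
        (by linarith)).comp_sub_left 1
      norm_num at this
      exact this.symm
    have hcont : ContinuousOn (fun t : ℝ => t ^ (a - 1)) (uIcc (1/2) 1) := by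
      refine continuousOn_id.rpow_const fun t ht => ?_
      rw [uIcc_of_le (by norm_num)] at ht
      exact Or.inl (show t ≠ 0 by linarith [ht.1])
    exact hsing.continuousOn_mul hcont
  exact hleft.trans hright

lemma betaFn_pos (ha : 0 < a) (hb : 0 < b) : 0 < betaFn a b :=
  intervalIntegral_pos_of_pos_on (intervalIntegrable_betaIntegrand ha hb)
    (fun _ ht => mul_pos (Real.rpow_pos_of_pos ht.1 _)
      (Real.rpow_pos_of_pos (sub_pos.2 ht.2) _)) zero_lt_one

end Beta

lemma regIncBeta_add_one_left_le_add_one_right {a b x : ℝ} (ha : 0 < a) (hb : 0 < b)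
    (hx0 : 0 ≤ x) (hx1 : x ≤ 1) : regIncBeta x (a + 1) b ≤ regIncBeta x a (b + 1) := by
  have hmem : ∀ {y : ℝ}, 0 ≤ y → y ≤ 1 → ∀ t ∈ uIcc 0 y, t ∈ Icc (0:ℝ) 1 := fun hy0 hy1 t ht => by
    rw [uIcc_of_le hy0] at ht
    exact ⟨ht.1, ht.2.trans hy1⟩
  have ha_succ : ∀ {y : ℝ}, 0 ≤ y → y ≤ 1 →
      ∫ t in (0:ℝ)..y, t ^ (a + 1 - 1) * (1 - t) ^ (b - 1) =
        ∫ t in (0:ℝ)..y, t * betaIntegrand a b t := fun hy0 hy1 =>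
    integral_congr fun t ht => betaIntegrand_add_one_left ha.ne' (hmem hy0 hy1 t ht).1
  have hb_succ : ∀ {y : ℝ}, 0 ≤ y → y ≤ 1 →
      ∫ t in (0:ℝ)..y, t ^ (a - 1) * (1 - t) ^ (b + 1 - 1) =
        ∫ t in (0:ℝ)..y, (1 - t) * betaIntegrand a b t := fun hy0 hy1 =>
    integral_congr fun t ht => betaIntegrand_add_one_right hb.ne' (hmem hy0 hy1 t ht).2
  have hpos₁ := betaFn_pos (by linarith : 0 < a + 1) hb
  have hpos₂ := betaFn_pos ha (by linarith : 0 < b + 1)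
  unfold regIncBeta betaFn at *
  rw [ha_succ zero_le_one le_rfl] at hpos₁
  rw [hb_succ zero_le_one le_rfl] at hpos₂
  rw [ha_succ hx0 hx1, ha_succ zero_le_one le_rfl, hb_succ hx0 hx1, hb_succ zero_le_one le_rfl,
    div_le_div_iff₀ hpos₁ hpos₂]
  exact integral_mul_integral_le_of_nonneg_weight (intervalIntegrable_betaIntegrand ha hb)
    (fun _ ht => betaIntegrand_nonneg ht) hx0 hx1

theorem case_one_three_incompatible_general (a b R c K : ℝ)
    (ha : 0 < a) (hb : 0 < b) (hR : 0 < R) (hc : 0 < c) :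
    ¬ (regIncBeta (1/2) a (b + 1) ≤ K
        ∧ regIncBeta (1/2) (a + 1) b ≥ K + R / (2 * c * (a + b + 1))) := by
  rintro ⟨hle, hge⟩
  have hgap : 0 < R / (2 * c * (a + b + 1)) := by positivity
  linarith [regIncBeta_add_one_left_le_add_one_right ha hb (x := 1/2) (by norm_num) (by norm_num)]

/-- with `K = (1/2)(1 + (R/c)(a/(a+b+1) − γ))`, the inequalities
`I_{1/2}(a, b+1) ≤ K` and `I_{1/2}(a+1, b) ≥ K + R/(2c(a+b+1))` are incompatible. -/
theorem case_one_three_incompatible (a b R c γ K : ℝ)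
    (ha : 0 < a) (hb : 0 < b) (hR : 0 < R) (hc : 0 < c)
    (hK : K = (1/2) * (1 + (R/c) * (a / (a + b + 1) - γ))) :
    ¬ (regIncBeta (1/2) a (b + 1) ≤ K
        ∧ regIncBeta (1/2) (a + 1) b ≥ K + R / (2 * c * (a + b + 1))) :=
  case_one_three_incompatible_general a b R c K ha hb hR hc
end

section
/- Fix R > 0, c > 0, γ ∈ ℝ, and α0, β0 > 0, and consider the private-sampling game defined in the context. The profile with q0 = q1 = 0 and σ_D(p) = 0 for all p ∈ [0,1] is a pure-strategy equilibrium if and only if (γ − (α0 + θ)/(α0 + β0 + 1))·R ≥ c for every θ ∈ {0,1}, equivalently if and only if (γ − (α0 + 1)/(α0 + β0 + 1))·R ≥ c. -/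
open intervalIntegral

/-- The attacker's posterior mean `m(θ) = (α0+θ)/(α0+β0+1)`. -/
noncomputable def postMean (α0 β0 θ : ℝ) : ℝ := (α0 + θ) / (α0 + β0 + 1)

/-- The attacker's conditional expectation of the defender's strategy,
`E_D(θ) = (∫_0^1 σ_D(p)·p^(α0+θ−1)(1−p)^(β0−θ) dp) / B(α0+θ, β0+1−θ)`. -/
noncomputable def expDef (α0 β0 θ : ℝ) (σD : ℝ → ℝ) : ℝ :=
  (∫ p in (0:ℝ)..1, σD p * (p ^ (α0 + θ - 1) * (1 - p) ^ (β0 - θ)))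
    / betaFn (α0 + θ) (β0 + 1 - θ)

/-- The attacker's (reduced) objective given sample `θ`:
`σ ↦ σ·((m(θ) − γ)R + c·(1 − 2E_D(θ)))`. -/
noncomputable def attackerObj (R c γ α0 β0 θ : ℝ) (σD : ℝ → ℝ) (σ : ℝ) : ℝ :=
  σ * ((postMean α0 β0 θ - γ) * R + c * (1 - 2 * expDef α0 β0 θ σD))

/-- `(q0, q1, σ_D)` is a pure-strategy equilibrium of the private-sampling game:
all strategies are probabilities, `q_θ` maximizes the attacker's objective for each
sample `θ ∈ {0,1}`, and for every `p ∈ [0,1]` with `p ≠ 1/2`, `σ_D(p)` minimizes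
the defender's objective `σ ↦ σ·(1 − 2((1−p)q0 + p·q1))`. -/
def IsPureEq (R c γ α0 β0 : ℝ) (q0 q1 : ℝ) (σD : ℝ → ℝ) : Prop :=
  q0 ∈ Set.Icc (0:ℝ) 1 ∧ q1 ∈ Set.Icc (0:ℝ) 1
    ∧ (∀ p ∈ Set.Icc (0:ℝ) 1, σD p ∈ Set.Icc (0:ℝ) 1)
    ∧ (∀ σ ∈ Set.Icc (0:ℝ) 1,
        attackerObj R c γ α0 β0 0 σD σ ≤ attackerObj R c γ α0 β0 0 σD q0)
    ∧ (∀ σ ∈ Set.Icc (0:ℝ) 1,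
        attackerObj R c γ α0 β0 1 σD σ ≤ attackerObj R c γ α0 β0 1 σD q1)
    ∧ (∀ p ∈ Set.Icc (0:ℝ) 1, p ≠ 1/2 → ∀ σ ∈ Set.Icc (0:ℝ) 1,
        σD p * (1 - 2 * ((1 - p) * q0 + p * q1))
          ≤ σ * (1 - 2 * ((1 - p) * q0 + p * q1)))

/-!
Against the defender who never defends `a`, `E_D ≡ 0`, so the attacker's objective is linear in
`σ` with slope `(m(θ) − γ)R + c`, and `σ = 0` is optimal exactly when this slope is nonpositive;
the defender's slope is `1 > 0`, so never defending is always a best reply. Since `m(θ)` increases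
with `θ` and `R > 0`, the constraint for `θ = 1` implies the one for `θ = 0`.
-/

open Set

lemma forall_mul_le_zero_mul_iff {k : ℝ} :
    (∀ σ ∈ Icc (0:ℝ) 1, σ * k ≤ 0 * k) ↔ k ≤ 0 :=
  ⟨fun h => by simpa using h 1 (right_mem_Icc.2 zero_le_one),
    fun hk σ hσ => by simpa using mul_nonpos_of_nonneg_of_nonpos hσ.1 hk⟩

lemma postMean_le_postMean {α0 β0 θ θ' : ℝ} (hden : 0 < α0 + β0 + 1) (hθ : θ ≤ θ') :
    postMean α0 β0 θ ≤ postMean α0 β0 θ' := by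
  unfold postMean
  gcongr

section ZeroDefence

variable (R c γ α0 β0 θ : ℝ)

@[simp]
lemma expDef_const_zero : expDef α0 β0 θ (fun _ => 0) = 0 := by
  simp [expDef]

lemma attackerObj_const_zero (σ : ℝ) :
    attackerObj R c γ α0 β0 θ (fun _ => 0) σ = σ * ((postMean α0 β0 θ - γ) * R + c) := by
  simp [attackerObj]

lemma zero_maximizes_attackerObj_iff :
    (∀ σ ∈ Icc (0:ℝ) 1,
        attackerObj R c γ α0 β0 θ (fun _ => 0) σ ≤ attackerObj R c γ α0 β0 θ (fun _ => 0) 0)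
      ↔ c ≤ (γ - postMean α0 β0 θ) * R := by
  simp only [attackerObj_const_zero, forall_mul_le_zero_mul_iff]
  constructor <;> intro h <;> linarith

lemma isPureEq_zero_iff :
    IsPureEq R c γ α0 β0 0 0 (fun _ => 0)
      ↔ c ≤ (γ - postMean α0 β0 0) * R ∧ c ≤ (γ - postMean α0 β0 1) * R := by
  have hzero : (0:ℝ) ∈ Icc (0:ℝ) 1 := left_mem_Icc.2 zero_le_one
  constructor
  · rintro ⟨-, -, -, h0, h1, -⟩
    exact ⟨(zero_maximizes_attackerObj_iff ..).1 h0, (zero_maximizes_attackerObj_iff ..).1 h1⟩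
  · rintro ⟨h0, h1⟩
    refine ⟨hzero, hzero, fun _ _ => hzero, (zero_maximizes_attackerObj_iff ..).2 h0,
      (zero_maximizes_attackerObj_iff ..).2 h1, fun p _ _ σ hσ => ?_⟩
    simpa using hσ.1

end ZeroDefence

theorem region_two_general (R c γ α0 β0 : ℝ)
    (hR : 0 < R) (hα : 0 < α0) (hβ : 0 < β0) :
    (IsPureEq R c γ α0 β0 0 0 (fun _ => 0)
      ↔ ∀ θ ∈ ({0, 1} : Set ℝ), (γ - (α0 + θ) / (α0 + β0 + 1)) * R ≥ c)
    ∧ ((∀ θ ∈ ({0, 1} : Set ℝ), (γ - (α0 + θ) / (α0 + β0 + 1)) * R ≥ c)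
      ↔ (γ - (α0 + 1) / (α0 + β0 + 1)) * R ≥ c) := by
  have hmono : postMean α0 β0 0 ≤ postMean α0 β0 1 :=
    postMean_le_postMean (by linarith) zero_le_one
  have h1_imp_h0 : c ≤ (γ - postMean α0 β0 1) * R → c ≤ (γ - postMean α0 β0 0) * R :=
    fun h => h.trans (by gcongr)
  simp only [forall_mem_insert, mem_singleton_iff, forall_eq, ge_iff_le]
  exact ⟨isPureEq_zero_iff .., ⟨And.right, fun h => ⟨h1_imp_h0 h, h⟩⟩⟩

/-- region 2 of Lemma 2: both players choosing target `b`
(`q0 = q1 = 0`, `σ_D ≡ 0`) is a pure-strategy equilibrium iff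
`(γ − (α0+θ)/(α0+β0+1))R ≥ c` for every `θ ∈ {0,1}`, equivalently iff
`(γ − (α0+1)/(α0+β0+1))R ≥ c`. -/
theorem region_two (R c γ α0 β0 : ℝ)
    (hR : 0 < R) (hc : 0 < c) (hα : 0 < α0) (hβ : 0 < β0) :
    (IsPureEq R c γ α0 β0 0 0 (fun _ => 0)
      ↔ ∀ θ ∈ ({0, 1} : Set ℝ), (γ - (α0 + θ) / (α0 + β0 + 1)) * R ≥ c)
    ∧ ((∀ θ ∈ ({0, 1} : Set ℝ), (γ - (α0 + θ) / (α0 + β0 + 1)) * R ≥ c)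
      ↔ (γ - (α0 + 1) / (α0 + β0 + 1)) * R ≥ c) :=
  region_two_general R c γ α0 β0 hR hα hβ
end

section
/- Fix R > 0, c > 0, γ ∈ ℝ, and α0, β0 > 0, and consider the private-sampling game defined in the context. The profile with q0 = 0, q1 = 1, and σ_D(p) = 1 if p > 1/2 and σ_D(p) = 0 if p < 1/2 (with σ_D(1/2) arbitrary) is a pure-strategy equilibrium if and only if I_{1/2}(α0, β0) lies in the closed interval [ (1/2)·(1 + (R/c)·(γ − (α0+1)/(α0+β0+1))) + (1/2)^(α0+β0)/(α0·B(α0,β0)), (1/2)·(1 + (R/c)·(γ − α0/(α0+β0+1))) − (1/2)^(α0+β0)/(β0·B(α0,β0)) ]. -/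
section RegionThreeAux
open intervalIntegral MeasureTheory Set

lemma betaIntegrand_integrable {a b : ℝ} (ha : 0 < a) (hb : 0 < b) :
    IntervalIntegrable (fun t : ℝ => t ^ (a - 1) * (1 - t) ^ (b - 1)) volume 0 1 := by
  have hL : IntervalIntegrable (fun t : ℝ => t ^ (a - 1) * (1 - t) ^ (b - 1)) volume 0 (1/2) := by
    apply IntervalIntegrable.mul_continuousOn
    · exact intervalIntegrable_rpow' (by linarith)
    · apply ContinuousOn.rpow_const
      · exact (continuous_const.sub continuous_id).continuousOn
      · intro t ht
        left
        rw [Set.uIcc_of_le (by norm_num : (0:ℝ) ≤ 1/2)] at ht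
        have := ht.2
        intro h; nlinarith [ht.2]
  have hR : IntervalIntegrable (fun t : ℝ => t ^ (a - 1) * (1 - t) ^ (b - 1)) volume (1/2) 1 := by
    apply IntervalIntegrable.continuousOn_mul (g := fun t : ℝ => t ^ (a-1))
    · have h0 : IntervalIntegrable (fun t : ℝ => t ^ (b - 1)) volume 0 (1/2) :=
        intervalIntegrable_rpow' (by linarith)
      have := h0.comp_sub_left 1
      norm_num at this
      exact this.symm
    · apply ContinuousOn.rpow_const continuousOn_id
      intro t ht
      rw [Set.uIcc_of_le (by norm_num : (1/2:ℝ) ≤ 1)] at ht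
      left; intro h; simp only [id] at h; nlinarith [ht.1]
  exact hL.trans hR

lemma betaIntegrand_integrable' {a b x y : ℝ} (ha : 0 < a) (hb : 0 < b)
    (hx : x ∈ Icc (0:ℝ) 1) (hy : y ∈ Icc (0:ℝ) 1) :
    IntervalIntegrable (fun t : ℝ => t ^ (a - 1) * (1 - t) ^ (b - 1)) volume x y :=
  (betaIntegrand_integrable ha hb).mono_set
    (by rw [Set.uIcc_of_le (zero_le_one)]; exact Set.uIcc_subset_Icc hx hy)

lemma betaFTC {a b : ℝ} (ha : 0 < a) (hb : 0 < b) {x : ℝ} (hx0 : 0 ≤ x) (hx1 : x ≤ 1) :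
    ∫ t in (0:ℝ)..x, (a * (t ^ (a - 1) * (1 - t) ^ b) - b * (t ^ a * (1 - t) ^ (b - 1)))
      = x ^ a * (1 - x) ^ b := by
  have key : ∫ t in (0:ℝ)..x, (a * (t ^ (a - 1) * (1 - t) ^ b) - b * (t ^ a * (1 - t) ^ (b - 1)))
      = x ^ a * (1 - x) ^ b - 0 ^ a * (1 - 0) ^ b := by
    apply intervalIntegral.integral_eq_sub_of_hasDerivAt_of_le hx0
    · apply ContinuousOn.mul
      · exact ContinuousOn.rpow_const continuousOn_id (fun t _ => Or.inr ha.le)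
      · exact ContinuousOn.rpow_const (continuous_const.sub continuous_id).continuousOn
          (fun t _ => Or.inr hb.le)
    · intro t ht
      have ht0 : t ≠ 0 := ne_of_gt ht.1
      have ht1 : (1 - t) ≠ 0 := by have := ht.2; intro h; nlinarith
      have h1 : HasDerivAt (fun t : ℝ => t ^ a) (a * t ^ (a - 1)) t :=
        Real.hasDerivAt_rpow_const (Or.inl ht0)
      have h2 : HasDerivAt (fun t : ℝ => (1 - t) ^ b) ((b * (1 - t) ^ (b - 1)) * (-1)) t := by
        have hinner : HasDerivAt (fun t : ℝ => 1 - t) (-1) t := by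
          simpa using (hasDerivAt_id t).const_sub 1
        exact (Real.hasDerivAt_rpow_const (p := b) (Or.inl ht1)).comp t hinner
      have := h1.fun_mul h2
      convert this using 1
      · rfl
      ring
    · have i1 : IntervalIntegrable (fun t : ℝ => t ^ (a - 1) * (1 - t) ^ b) volume 0 x := by
        have := betaIntegrand_integrable' ha (by linarith : (0:ℝ) < b + 1)
          (Set.mem_Icc.2 ⟨le_refl 0, zero_le_one⟩) (Set.mem_Icc.2 ⟨hx0, hx1⟩)
        simpa using this
      have i2 : IntervalIntegrable (fun t : ℝ => t ^ a * (1 - t) ^ (b - 1)) volume 0 x := by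
        have := betaIntegrand_integrable' (by linarith : (0:ℝ) < a + 1) hb
          (Set.mem_Icc.2 ⟨le_refl 0, zero_le_one⟩) (Set.mem_Icc.2 ⟨hx0, hx1⟩)
        simpa using this
      exact (i1.const_mul a).sub (i2.const_mul b)
  rw [key, Real.zero_rpow ha.ne']
  ring

lemma ae_ne_half : ∀ᵐ p : ℝ, p ≠ (1/2 : ℝ) := by
  rw [MeasureTheory.ae_iff]
  have : {p : ℝ | ¬ p ≠ (1/2:ℝ)} = {(1/2 : ℝ)} := by ext p; simp
  rw [this]
  exact Real.volume_singleton

lemma sigma_integral (σD : ℝ → ℝ)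
    (hσD_gt : ∀ p : ℝ, 1/2 < p → σD p = 1)
    (hσD_lt : ∀ p : ℝ, p < 1/2 → σD p = 0)
    {a b : ℝ} (ha : 0 < a) (hb : 0 < b) :
    ∫ p in (0:ℝ)..1, σD p * (p ^ (a - 1) * (1 - p) ^ (b - 1))
      = (∫ p in (0:ℝ)..1, p ^ (a - 1) * (1 - p) ^ (b - 1))
        - ∫ p in (0:ℝ)..(1/2), p ^ (a - 1) * (1 - p) ^ (b - 1) := by
  set g : ℝ → ℝ := fun p => p ^ (a - 1) * (1 - p) ^ (b - 1) with hg
  have hmem : (0:ℝ) ∈ Icc (0:ℝ) 1 := by norm_num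
  have hmem2 : (1/2:ℝ) ∈ Icc (0:ℝ) 1 := by norm_num
  have hmem3 : (1:ℝ) ∈ Icc (0:ℝ) 1 := by norm_num
  have hgL := betaIntegrand_integrable' ha hb hmem hmem2
  have hgR := betaIntegrand_integrable' ha hb hmem2 hmem3
  have iL : IntervalIntegrable (fun p => σD p * g p) volume 0 (1/2) := by
    rw [intervalIntegrable_iff]
    apply MeasureTheory.Integrable.congr (MeasureTheory.integrable_zero _ _ _)
    filter_upwards [MeasureTheory.ae_restrict_of_ae ae_ne_half,
      MeasureTheory.ae_restrict_mem measurableSet_uIoc] with p hp hpm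
    rw [Set.uIoc_of_le (by norm_num : (0:ℝ) ≤ 1/2)] at hpm
    rw [hσD_lt p (lt_of_le_of_ne hpm.2 hp)]
    simp
  have iR : IntervalIntegrable (fun p => σD p * g p) volume (1/2) 1 := by
    rw [intervalIntegrable_iff]
    rw [intervalIntegrable_iff] at hgR
    apply MeasureTheory.Integrable.congr hgR
    filter_upwards [MeasureTheory.ae_restrict_mem measurableSet_uIoc] with p hpm
    rw [Set.uIoc_of_le (by norm_num : (1/2:ℝ) ≤ 1)] at hpm
    rw [hσD_gt p hpm.1]
    ring
  have h0 : ∫ p in (0:ℝ)..(1/2), σD p * g p = 0 := by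
    have : ∫ p in (0:ℝ)..(1/2), σD p * g p = ∫ p in (0:ℝ)..(1/2), (0:ℝ) := by
      apply intervalIntegral.integral_congr_ae
      filter_upwards [ae_ne_half] with p hp hpm
      rw [Set.uIoc_of_le (by norm_num : (0:ℝ) ≤ 1/2)] at hpm
      rw [hσD_lt p (lt_of_le_of_ne hpm.2 hp)]
      ring
    simpa using this
  have h1 : ∫ p in (1/2:ℝ)..1, σD p * g p = ∫ p in (1/2:ℝ)..1, g p := by
    apply intervalIntegral.integral_congr_ae
    filter_upwards with p hpm
    rw [Set.uIoc_of_le (by norm_num : (1/2:ℝ) ≤ 1)] at hpm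
    rw [hσD_gt p hpm.1]; ring
  have split1 := intervalIntegral.integral_add_adjacent_intervals iL iR
  have split2 := intervalIntegral.integral_add_adjacent_intervals hgL hgR
  rw [← split1, ← split2, h0, h1]
  ring

lemma rpow_split (y t : ℝ) (hy : 0 < y) : t ^ y = t ^ (y - 1) * t := by
  rcases eq_or_ne t 0 with h | h
  · rw [h, Real.zero_rpow hy.ne', mul_zero]
  · rw [← Real.rpow_add_one h, sub_add_cancel]

lemma beta_split {a b : ℝ} (ha : 0 < a) (hb : 0 < b) {x : ℝ} (hx0 : 0 ≤ x) (hx1 : x ≤ 1) :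
    ∫ t in (0:ℝ)..x, t ^ (a - 1) * (1 - t) ^ (b - 1)
      = (∫ t in (0:ℝ)..x, t ^ (a - 1) * (1 - t) ^ b)
        + ∫ t in (0:ℝ)..x, t ^ a * (1 - t) ^ (b - 1) := by
  have i1 : IntervalIntegrable (fun t : ℝ => t ^ (a - 1) * (1 - t) ^ b) volume 0 x := by
    have := betaIntegrand_integrable' ha (by linarith : (0:ℝ) < b + 1)
      (Set.mem_Icc.2 ⟨le_refl 0, zero_le_one⟩) (Set.mem_Icc.2 ⟨hx0, hx1⟩)
    simpa using this
  have i2 : IntervalIntegrable (fun t : ℝ => t ^ a * (1 - t) ^ (b - 1)) volume 0 x := by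
    have := betaIntegrand_integrable' (by linarith : (0:ℝ) < a + 1) hb
      (Set.mem_Icc.2 ⟨le_refl 0, zero_le_one⟩) (Set.mem_Icc.2 ⟨hx0, hx1⟩)
    simpa using this
  rw [← intervalIntegral.integral_add i1 i2]
  apply intervalIntegral.integral_congr
  intro t _
  have e1 := rpow_split a t ha
  have e2 := rpow_split b (1 - t) hb
  simp only
  rw [e1, e2]
  ring

lemma betaFn_pos' {a b : ℝ} (ha : 0 < a) (hb : 0 < b) :
    0 < ∫ t in (0:ℝ)..1, t ^ (a - 1) * (1 - t) ^ (b - 1) := by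
  apply intervalIntegral.intervalIntegral_pos_of_pos_on (betaIntegrand_integrable ha hb)
  · intro t ht
    exact mul_pos (Real.rpow_pos_of_pos ht.1 _) (Real.rpow_pos_of_pos (by linarith [ht.2]) _)
  · norm_num

lemma beta_rel_x {a b x : ℝ} (ha : 0 < a) (hb : 0 < b) (hx0 : 0 ≤ x) (hx1 : x ≤ 1) :
    (∫ t in (0:ℝ)..x, t ^ (a - 1) * (1 - t) ^ b)
      = (x ^ a * (1 - x) ^ b + b * ∫ t in (0:ℝ)..x, t ^ (a - 1) * (1 - t) ^ (b - 1)) / (a + b)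
    ∧ (∫ t in (0:ℝ)..x, t ^ a * (1 - t) ^ (b - 1))
      = (a * (∫ t in (0:ℝ)..x, t ^ (a - 1) * (1 - t) ^ (b - 1)) - x ^ a * (1 - x) ^ b)
          / (a + b) := by
  have hab : (0:ℝ) < a + b := by linarith
  have i1 : IntervalIntegrable (fun t : ℝ => t ^ (a - 1) * (1 - t) ^ b) volume 0 x := by
    have := betaIntegrand_integrable' ha (by linarith : (0:ℝ) < b + 1)
      (Set.mem_Icc.2 ⟨le_refl 0, zero_le_one⟩) (Set.mem_Icc.2 ⟨hx0, hx1⟩)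
    simpa using this
  have i2 : IntervalIntegrable (fun t : ℝ => t ^ a * (1 - t) ^ (b - 1)) volume 0 x := by
    have := betaIntegrand_integrable' (by linarith : (0:ℝ) < a + 1) hb
      (Set.mem_Icc.2 ⟨le_refl 0, zero_le_one⟩) (Set.mem_Icc.2 ⟨hx0, hx1⟩)
    simpa using this
  have hFTC := betaFTC ha hb hx0 hx1
  rw [intervalIntegral.integral_sub (i1.const_mul a) (i2.const_mul b),
    intervalIntegral.integral_const_mul, intervalIntegral.integral_const_mul] at hFTC
  have hsplit := beta_split ha hb hx0 hx1
  refine ⟨?_, ?_⟩ <;> rw [eq_div_iff hab.ne']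
  · linear_combination hFTC - b * hsplit
  · linear_combination -hFTC - a * hsplit

lemma aux_le {c x u : ℝ} (hc : 0 < c) : 2*c*(x - u) ≤ 0 ↔ x ≤ u := by
  constructor <;> intro h <;> nlinarith

lemma def_lt {p σ : ℝ} (hσ0 : 0 ≤ σ) (h : p < 1/2) : 0 * (1 - 2*p) ≤ σ * (1 - 2*p) := by
  nlinarith

lemma def_gt {p σ : ℝ} (hσ1 : σ ≤ 1) (h : 1/2 < p) : 1 * (1 - 2*p) ≤ σ * (1 - 2*p) := by
  nlinarith

lemma aux_ge {c x l : ℝ} (hc : 0 < c) : 0 ≤ 2*c*(x - l) ↔ l ≤ x := by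
  constructor <;> intro h <;> nlinarith

end RegionThreeAux

open intervalIntegral

/-- region 3 of Lemma 2: the attacker following its sample
(`q0 = 0`, `q1 = 1`) and the defender defending `a` exactly when `p > 1/2`
(with `σ_D(1/2)` arbitrary in `[0,1]`) is a pure-strategy equilibrium iff
`I_{1/2}(α0, β0)` lies in the stated closed interval. -/
theorem region_three (R c γ α0 β0 : ℝ)
    (hR : 0 < R) (hc : 0 < c) (hα : 0 < α0) (hβ : 0 < β0)
    (σD : ℝ → ℝ)
    (hσD_gt : ∀ p : ℝ, 1/2 < p → σD p = 1)
    (hσD_lt : ∀ p : ℝ, p < 1/2 → σD p = 0)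
    (hσD_half : σD (1/2) ∈ Set.Icc (0:ℝ) 1) :
    IsPureEq R c γ α0 β0 0 1 σD
      ↔ regIncBeta (1/2) α0 β0 ∈ Set.Icc
          ((1/2) * (1 + (R/c) * (γ - (α0 + 1) / (α0 + β0 + 1)))
            + (1/2 : ℝ) ^ (α0 + β0) / (α0 * betaFn α0 β0))
          ((1/2) * (1 + (R/c) * (γ - α0 / (α0 + β0 + 1)))
            - (1/2 : ℝ) ^ (α0 + β0) / (β0 * betaFn α0 β0)) := by
  have hβ1 : (0:ℝ) < β0 + 1 := by linarith
  have hα1 : (0:ℝ) < α0 + 1 := by linarith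
  have hab : (0:ℝ) < α0 + β0 := by linarith
  have hab1 : (0:ℝ) < α0 + β0 + 1 := by linarith
  have h2 : (0:ℝ) ≤ 1/2 := by norm_num
  have h21 : (1/2:ℝ) ≤ 1 := by norm_num
  have hBpos : 0 < ∫ t in (0:ℝ)..1, t ^ (α0 - 1) * (1 - t) ^ (β0 - 1) := betaFn_pos' hα hβ
  -- expDef for θ = 0
  have hE0 : expDef α0 β0 0 σD
      = ((∫ t in (0:ℝ)..1, t ^ (α0 - 1) * (1 - t) ^ β0)
          - ∫ t in (0:ℝ)..(1/2:ℝ), t ^ (α0 - 1) * (1 - t) ^ β0)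
        / ∫ t in (0:ℝ)..1, t ^ (α0 - 1) * (1 - t) ^ β0 := by
    have hs := sigma_integral σD hσD_gt hσD_lt hα hβ1
    simp only [add_sub_cancel_right] at hs
    rw [expDef, betaFn]
    simp only [add_zero, sub_zero, add_sub_cancel_right]
    rw [hs]
  -- expDef for θ = 1
  have hE1 : expDef α0 β0 1 σD
      = ((∫ t in (0:ℝ)..1, t ^ α0 * (1 - t) ^ (β0 - 1))
          - ∫ t in (0:ℝ)..(1/2:ℝ), t ^ α0 * (1 - t) ^ (β0 - 1))
        / ∫ t in (0:ℝ)..1, t ^ α0 * (1 - t) ^ (β0 - 1) := by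
    have hs := sigma_integral σD hσD_gt hσD_lt hα1 hβ
    simp only [add_sub_cancel_right] at hs
    rw [expDef, betaFn]
    simp only [add_sub_cancel_right]
    rw [hs]
  have hhalfpow : ((1:ℝ)/2) ^ α0 * ((1 - 1/2:ℝ)) ^ β0 = (1/2:ℝ) ^ (α0 + β0) := by
    rw [show (1 - 1/2 : ℝ) = 1/2 by norm_num,
      ← Real.rpow_add (by norm_num : (0:ℝ) < 1/2)]
  have honepow : ((1:ℝ)) ^ α0 * ((1 - 1:ℝ)) ^ β0 = 0 := by
    rw [show (1 - 1 : ℝ) = 0 by norm_num, Real.zero_rpow hβ.ne', mul_zero]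
  obtain ⟨r1x, r2x⟩ := beta_rel_x hα hβ h2 h21
  obtain ⟨r1f, r2f⟩ := beta_rel_x hα hβ zero_le_one (le_refl 1)
  rw [hhalfpow] at r1x r2x
  rw [honepow, zero_add] at r1f
  rw [honepow, sub_zero] at r2f
  -- the two key linear identities
  have eq0 : (postMean α0 β0 0 - γ) * R + c * (1 - 2 * expDef α0 β0 0 σD)
      = 2*c*(regIncBeta (1/2) α0 β0
          - ((1/2) * (1 + (R/c) * (γ - α0 / (α0 + β0 + 1)))
            - (1/2 : ℝ) ^ (α0 + β0) / (β0 * betaFn α0 β0))) := by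
    rw [hE0, r1f, r1x, postMean, regIncBeta, betaFn, add_zero]
    set Br := ∫ t in (0:ℝ)..1, t ^ (α0 - 1) * (1 - t) ^ (β0 - 1) with hBr
    set Jr := ∫ t in (0:ℝ)..(1/2:ℝ), t ^ (α0 - 1) * (1 - t) ^ (β0 - 1) with hJr
    field_simp
    ring
  have eq1 : (postMean α0 β0 1 - γ) * R + c * (1 - 2 * expDef α0 β0 1 σD)
      = 2*c*(regIncBeta (1/2) α0 β0
          - ((1/2) * (1 + (R/c) * (γ - (α0 + 1) / (α0 + β0 + 1)))
            + (1/2 : ℝ) ^ (α0 + β0) / (α0 * betaFn α0 β0))) := by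
    rw [hE1, r2f, r2x, postMean, regIncBeta, betaFn]
    set Br := ∫ t in (0:ℝ)..1, t ^ (α0 - 1) * (1 - t) ^ (β0 - 1) with hBr
    set Jr := ∫ t in (0:ℝ)..(1/2:ℝ), t ^ (α0 - 1) * (1 - t) ^ (β0 - 1) with hJr
    field_simp
    ring
  set Ireg := regIncBeta (1/2) α0 β0 with hIreg
  set Bf := betaFn α0 β0 with hBf
  rw [Set.mem_Icc]
  constructor
  · rintro ⟨-, -, -, h4, h5, -⟩
    have hA0 := h4 1 (by norm_num)
    have hA1 := h5 0 (by norm_num)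
    simp only [attackerObj, one_mul, zero_mul] at hA0 hA1
    rw [eq0] at hA0
    rw [eq1] at hA1
    exact ⟨(aux_ge hc).mp hA1, (aux_le hc).mp hA0⟩
  · rintro ⟨hL, hU⟩
    have hA0 : (postMean α0 β0 0 - γ) * R + c * (1 - 2 * expDef α0 β0 0 σD) ≤ 0 := by
      rw [eq0]; exact (aux_le hc).mpr hU
    have hA1 : 0 ≤ (postMean α0 β0 1 - γ) * R + c * (1 - 2 * expDef α0 β0 1 σD) := by
      rw [eq1]; exact (aux_ge hc).mpr hL
    refine ⟨by norm_num, by norm_num, ?_, ?_, ?_, ?_⟩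
    · intro p _
      rcases lt_trichotomy p (1/2) with h | h | h
      · rw [hσD_lt p h]; norm_num
      · rw [h]; exact hσD_half
      · rw [hσD_gt p h]; norm_num
    · intro σ hσ
      simp only [attackerObj, zero_mul]
      exact mul_nonpos_of_nonneg_of_nonpos hσ.1 hA0
    · intro σ hσ
      simp only [attackerObj, one_mul]
      have := mul_le_mul_of_nonneg_right hσ.2 hA1
      rwa [one_mul] at this
    · intro p _ hne σ hσ
      simp only [mul_zero, zero_add, mul_one]
      rcases hne.lt_or_gt with h | h
      · rw [hσD_lt p h]
        exact def_lt hσ.1 h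
      · rw [hσD_gt p h]
        exact def_gt hσ.2 h
end
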